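/- arXiv:2603.16326 — 7 statements merged into one kernel-verified Lean document; each statement's English description precedes it below -/
import Mathlib

section
/- Let p, q, r ≥ 2 be real numbers with p² + q² + r² − pqr ≤ 4, and let α(x) = (x + √(x²−4))/2. Then α(q)·r − p ≥ 0. -/
theorem markov_second_form (p q r : ℝ) (hp : 2 ≤ p) (hq : 2 ≤ q) (hr : 2 ≤ r)
    (hC : p ^ 2 + q ^ 2 + r ^ 2 - p * q * r ≤ 4) :
    ((q + Real.sqrt (q ^ 2 - 4)) / 2) * r - p ≥ 0 := by
  have h4 : (0:ℝ) ≤ q ^ 2 - 4 := by nlinarith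
  have hs := Real.sq_sqrt h4
  have hsn := Real.sqrt_nonneg (q ^ 2 - 4)
  set s := Real.sqrt (q ^ 2 - 4) with hsdef
  nlinarith [mul_nonneg hsn (by linarith : (0:ℝ) ≤ r), sq_nonneg (s * r + 2 * p - q * r), sq_nonneg (s * r - 2 * p + q * r), mul_pos (by linarith : (0:ℝ) < q) (by linarith : (0:ℝ) < r)]
end

section
/- Let p, q, r ≥ 2 be real numbers with p² + q² + r² − pqr ≤ 4, and let α(x) = (x + √(x²−4))/2. Then α(q)·α(r) − α(p) ≥ 0 (triangle inequality for the α-values). -/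
set_option maxHeartbeats 1600000 in
theorem markov_triangle_inequality (p q r : ℝ) (hp : 2 ≤ p) (hq : 2 ≤ q) (hr : 2 ≤ r)
    (hC : p ^ 2 + q ^ 2 + r ^ 2 - p * q * r ≤ 4) :
    ((q + Real.sqrt (q ^ 2 - 4)) / 2) * ((r + Real.sqrt (r ^ 2 - 4)) / 2) -
      (p + Real.sqrt (p ^ 2 - 4)) / 2 ≥ 0 := by
  have hp4 : (0:ℝ) ≤ p ^ 2 - 4 := by nlinarith
  have hq4 : (0:ℝ) ≤ q ^ 2 - 4 := by nlinarith
  have hr4 : (0:ℝ) ≤ r ^ 2 - 4 := by nlinarith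
  set s := Real.sqrt (q ^ 2 - 4) with hsdef
  set t := Real.sqrt (r ^ 2 - 4) with htdef
  set u := Real.sqrt (p ^ 2 - 4) with hudef
  have hs2 : s ^ 2 = q ^ 2 - 4 := Real.sq_sqrt hq4
  have ht2 : t ^ 2 = r ^ 2 - 4 := Real.sq_sqrt hr4
  have hu2 : u ^ 2 = p ^ 2 - 4 := Real.sq_sqrt hp4
  have hs0 : 0 ≤ s := Real.sqrt_nonneg _
  have ht0 : 0 ≤ t := Real.sqrt_nonneg _
  have hu0 : 0 ≤ u := Real.sqrt_nonneg _
  -- key: p ≤ (qr + st)/2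
  have h1 : (2*p - q*r) ^ 2 ≤ (s*t) ^ 2 := by nlinarith [hs2, ht2, hC]
  have key : 2*p ≤ q*r + s*t := by nlinarith [h1, mul_nonneg hs0 ht0]
  obtain ⟨M, hMdef⟩ : ∃ M : ℝ, M = (q + s) * (r + t) / 4 := ⟨_, rfl⟩
  have hqs : (q + s) * (q - s) = 4 := by nlinarith [hs2]
  have hrt : (r + t) * (r - t) = 4 := by nlinarith [ht2]
  have hM1 : 1 ≤ M := by nlinarith [mul_nonneg hs0 ht0, mul_nonneg hs0 (le_trans (by norm_num) hr), mul_nonneg ht0 (le_trans (by norm_num) hq)]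
  have hMinv : M * ((q - s) * (r - t) / 4) = 1 := by
    have h : M * ((q - s) * (r - t) / 4) = ((q + s) * (q - s)) * ((r + t) * (r - t)) / 16 := by
      rw [hMdef]; ring
    rw [h, hqs, hrt]; norm_num
  have hMp : M * p ≤ M ^ 2 + 1 := by
    have h2 : M ^ 2 + 1 = M * ((q*r + s*t)/2) := by
      have : M ^ 2 + M * ((q - s) * (r - t) / 4) = M * ((q*r + s*t)/2) := by
        rw [hMdef]; ring
      linarith [hMinv, this]
    rw [h2]
    have hM0 : 0 < M := by linarith
    have : p ≤ (q*r + s*t)/2 := by linarith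
    exact mul_le_mul_of_nonneg_left this (le_of_lt hM0)
  have h2Mp : p ≤ 2 * M := by nlinarith [hMp, hM1]
  have hu : u ≤ 2 * M - p := by nlinarith [hu2, hMp, hu0, h2Mp]
  have : ((q + s) / 2) * ((r + t) / 2) = M := by rw [hMdef]; ring
  rw [this]
  linarith [hu]
end

section
/- Let p₁₂, p₂₃, p₃₁ ≥ 2 be real numbers with p₁₂² + p₂₃² + p₃₁² − p₁₂p₂₃p₃₁ ≤ 4, and let à be the symmetric 3×3 matrix with diagonal entries 2 and off-diagonal entries p₁₂, p₂₃, p₃₁. Then à has exactly one positive eigenvalue λ, the other two eigenvalues are non-positive, and λ > 2 + √(p₁₂² + p₂₃² + p₃₁²). -/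
/-!
Shifting by the diagonal, the characteristic polynomial of `Ã` becomes the depressed cubic
`f(s) = s³ - q s - r` with `q = p₁₂² + p₂₃² + p₃₁²` and `r = 2 p₁₂ p₂₃ p₃₁`. Since
`f(√q) = -r < 0`, `f` has a root `a > √q`, and `f(s) = (s - a)(s² + a s + a² - q)`.
AM-GM gives `27 r² ≤ 4 q³`, i.e. a nonnegative discriminant, which forces the quadratic factor
to have real roots `(-a ± d)/2`. The Markov condition says `f(-2) ≤ 0`, and `p ≥ 2` gives
`a ≥ 4`; together they put both roots of the quadratic factor at or below `-2`.
-/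

open Matrix

theorem det_smul_one_sub_of_fin_three {R : Type*} [CommRing R] (t c x y z : R) :
    (t • (1 : Matrix (Fin 3) (Fin 3) R) - !![c, x, z; x, c, y; z, y, c]).det =
      (t - c) ^ 3 - (x ^ 2 + y ^ 2 + z ^ 2) * (t - c) - 2 * (x * y * z) := by
  simp only [det_fin_three, Matrix.sub_apply, Matrix.smul_apply, one_apply, smul_eq_mul,
    of_apply, cons_val', cons_val_zero, cons_val_fin_one, cons_val_one, cons_val, Fin.reduceEq,
    Fin.isValue, ↓reduceIte, mul_one, mul_zero, zero_sub, mul_neg, neg_mul, neg_neg,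
    zero_ne_one, one_ne_zero]
  ring

theorem mul_mul_le_add_add_pow_three {x y z : ℝ} (hx : 0 ≤ x) (hy : 0 ≤ y) (hz : 0 ≤ z) :
    27 * (x * y * z) ≤ (x + y + z) ^ 3 := by
  have hs := add_nonneg (add_nonneg hx hy) hz
  nlinarith [mul_nonneg hx (sq_nonneg (y - z)), mul_nonneg hy (sq_nonneg (z - x)),
    mul_nonneg hz (sq_nonneg (x - y)), mul_nonneg hs (sq_nonneg (x - y)),
    mul_nonneg hs (sq_nonneg (y - z)), mul_nonneg hs (sq_nonneg (x - z))]

theorem exists_depressed_cubic_root_gt_sqrt (q r : ℝ) (hq : 0 ≤ q) (hr : 0 < r) :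
    ∃ a, √q < a ∧ a ^ 3 - q * a - r = 0 := by
  set b := q + r + 1
  have hsq : √q ^ 2 = q := Real.sq_sqrt hq
  have hb : √q ≤ b := by nlinarith [Real.sqrt_nonneg q]
  have hf_sqrt : √q ^ 3 - q * √q - r < 0 := by
    have : √q ^ 3 = q * √q := by rw [pow_succ, hsq]
    linarith
  have hf_b : 0 ≤ b ^ 3 - q * b - r := by
    have : q + r ≤ b ^ 2 := by nlinarith
    nlinarith
  obtain ⟨a, ⟨ha_ge, -⟩, ha⟩ := intermediate_value_Icc hb
    (by fun_prop : Continuous fun x : ℝ => x ^ 3 - q * x - r).continuousOn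
    ⟨hf_sqrt.le, hf_b⟩
  refine ⟨a, ha_ge.lt_of_ne ?_, ha⟩
  rintro rfl
  exact hf_sqrt.ne ha

section DepressedCubic

variable {q r a : ℝ}

theorem three_mul_sq_le_four_mul (hroot : a ^ 3 - q * a - r = 0) (ha : q < a ^ 2)
    (hdisc : 27 * r ^ 2 ≤ 4 * q ^ 3) : 3 * a ^ 2 ≤ 4 * q := by
  -- the discriminant of the cubic is that of its quadratic factor times the factor's value at `a`, squared
  have hfactor : 4 * q ^ 3 - 27 * r ^ 2 = (4 * q - 3 * a ^ 2) * (3 * a ^ 2 - q) ^ 2 := by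
    rw [show r = a ^ 3 - q * a by linarith]
    ring
  have := nonneg_of_mul_nonneg_left (hfactor ▸ sub_nonneg.2 hdisc)
    (pow_pos (by nlinarith [sq_nonneg a]) 2)
  linarith

theorem depressed_cubic_eq_mul {d : ℝ} (hroot : a ^ 3 - q * a - r = 0)
    (hd : d ^ 2 = 4 * q - 3 * a ^ 2) (s : ℝ) :
    s ^ 3 - q * s - r = (s - a) * (s - (-a - d) / 2) * (s - (-a + d) / 2) := by
  linear_combination hroot + ((s - a) / 4) * hd

theorem sqrt_four_mul_sub_three_sq_le (hroot : a ^ 3 - q * a - r = 0) (ha : 4 ≤ a)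
    (hneg : 2 * q - r ≤ 8) : √(4 * q - 3 * a ^ 2) ≤ a - 4 := by
  rw [Real.sqrt_le_left (by linarith)]
  nlinarith

end DepressedCubic

theorem eigenvalues_of_pseudo_Cartan (p12 p23 p31 : ℝ)
    (h12 : 2 ≤ p12) (h23 : 2 ≤ p23) (h31 : 2 ≤ p31)
    (hC : p12 ^ 2 + p23 ^ 2 + p31 ^ 2 - p12 * p23 * p31 ≤ 4) :
    ∃ lam nu1 nu2 : ℝ,
      (∀ t : ℝ, (t • (1 : Matrix (Fin 3) (Fin 3) ℝ) -
          !![2, p12, p31; p12, 2, p23; p31, p23, 2]).det =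
        (t - lam) * (t - nu1) * (t - nu2)) ∧
      nu1 ≤ 0 ∧ nu2 ≤ 0 ∧ 2 + Real.sqrt (p12 ^ 2 + p23 ^ 2 + p31 ^ 2) < lam := by
  set q := p12 ^ 2 + p23 ^ 2 + p31 ^ 2
  set r := 2 * (p12 * p23 * p31)
  have hq : 12 ≤ q := by nlinarith
  have hr : 16 ≤ r := by nlinarith
  have hdisc : 27 * r ^ 2 ≤ 4 * q ^ 3 := by
    nlinarith [mul_mul_le_add_add_pow_three (sq_nonneg p12) (sq_nonneg p23) (sq_nonneg p31)]
  obtain ⟨a, hqa, hroot⟩ := exists_depressed_cubic_root_gt_sqrt q r (by linarith) (by linarith)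
  have hqa2 : q < a ^ 2 := (Real.sqrt_lt' (by linarith [Real.sqrt_nonneg q])).1 hqa
  -- `a³ - 12a - 16 = (a - 4)(a + 2)²`
  have ha4 : 4 ≤ a := by nlinarith [Real.sqrt_nonneg q]
  set d := √(4 * q - 3 * a ^ 2)
  have hd : d ^ 2 = 4 * q - 3 * a ^ 2 :=
    Real.sq_sqrt (by linarith [three_mul_sq_le_four_mul hroot hqa2 hdisc])
  have hdle : d ≤ a - 4 := sqrt_four_mul_sub_three_sq_le hroot ha4 (by linarith)
  refine ⟨2 + a, 2 + (-a - d) / 2, 2 + (-a + d) / 2, fun t => ?_, ?_, ?_, by linarith⟩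
  · rw [det_smul_one_sub_of_fin_three, depressed_cubic_eq_mul hroot hd]
    ring
  · linarith [Real.sqrt_nonneg (4 * q - 3 * a ^ 2)]
  · linarith
end

section
/- Let à be the symmetric 3×3 matrix with diagonal 2 and off-diagonal entries p₁₂, p₂₃, p₃₁ ≥ 2 satisfying p₁₂² + p₂₃² + p₃₁² − p₁₂p₂₃p₃₁ ≤ 4, and let λ be its unique positive eigenvalue. Then the vector v with components v₁ = (λ−2)² + (p₁₂+p₁₃)(λ−2) + p₁₂p₂₃ + p₁₃p₃₂ − p₂₃², v₂ = (λ−2)² + (p₂₃+p₂₁)(λ−2) + p₂₃p₃₁ + p₂₁p₁₃ − p₃₁², v₃ = (λ−2)² + (p₃₁+p₃₂)(λ−2) + p₃₁p₁₂ + p₃₂p₂₁ − p₁₂² (with p_{ji} = p_{ij}) satisfies Ãv = λv, and all three components of v are strictly positive. -/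
open Matrix

theorem positive_eigenvector_of_pseudo_Cartan (p12 p23 p31 : ℝ)
    (h12 : 2 ≤ p12) (h23 : 2 ≤ p23) (h31 : 2 ≤ p31)
    (hC : p12 ^ 2 + p23 ^ 2 + p31 ^ 2 - p12 * p23 * p31 ≤ 4)
    (lam : ℝ) (hlam : 0 < lam)
    (heig : (lam • (1 : Matrix (Fin 3) (Fin 3) ℝ) -
        !![2, p12, p31; p12, 2, p23; p31, p23, 2]).det = 0) :
    let v : Fin 3 → ℝ := ![
      (lam - 2) ^ 2 + (p12 + p31) * (lam - 2) + p12 * p23 + p31 * p23 - p23 ^ 2,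
      (lam - 2) ^ 2 + (p23 + p12) * (lam - 2) + p23 * p31 + p12 * p31 - p31 ^ 2,
      (lam - 2) ^ 2 + (p31 + p23) * (lam - 2) + p31 * p12 + p23 * p12 - p12 ^ 2]
    (!![2, p12, p31; p12, 2, p23; p31, p23, 2] : Matrix (Fin 3) (Fin 3) ℝ).mulVec v =
        lam • v ∧ ∀ i, 0 < v i := by
  intro v
  have hE : (lam - 2) ^ 3 - (p12 ^ 2 + p23 ^ 2 + p31 ^ 2) * (lam - 2)
      - 2 * (p12 * p23 * p31) = 0 := by
    have := heig
    simp [Matrix.det_fin_three, Matrix.smul_apply, Matrix.one_apply] at this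
    ring_nf at this ⊢
    linarith [this]
  set μ := lam - 2 with hμ
  have hμgt : 2 < μ := by
    by_contra h
    push_neg at h
    have h1 : -2 < μ := by simp only [hμ]; linarith
    have hS : 12 ≤ p12 ^ 2 + p23 ^ 2 + p31 ^ 2 := by nlinarith
    have h2 : μ ^ 2 - 2 * μ + 4 < 12 := by
      nlinarith [mul_pos (show (0:ℝ) < μ + 2 by linarith) (show (0:ℝ) < 4 - μ by linarith)]
    nlinarith [mul_pos (show (0:ℝ) < μ + 2 by linarith)
      (show (0:ℝ) < (p12 ^ 2 + p23 ^ 2 + p31 ^ 2) - (μ ^ 2 - 2 * μ + 4) by linarith)]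
  have hP12 : 0 < p12 := by linarith
  have hP23 : 0 < p23 := by linarith
  have hP31 : 0 < p31 := by linarith
  have hμpos : 0 < μ := by linarith
  have key : ∀ a b c : ℝ, 0 < a → 0 < b → 0 < c →
      μ ^ 3 - (a ^ 2 + b ^ 2 + c ^ 2) * μ - 2 * (a * b * c) = 0 → a < μ := by
    intro a b c ha hb hc hEq
    by_contra h
    push_neg at h
    nlinarith [mul_nonneg (mul_nonneg (sub_nonneg.2 h) (by linarith : (0:ℝ) ≤ a + μ)) hμpos.le,
      mul_pos ha (mul_pos hb hc), mul_pos (mul_pos hb hb) hμpos, mul_pos (mul_pos hc hc) hμpos]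
  have hm23 : p23 < μ := key p23 p12 p31 hP23 hP12 hP31 (by linear_combination hE)
  have hm31 : p31 < μ := key p31 p12 p23 hP31 hP12 hP23 (by linear_combination hE)
  have hm12 : p12 < μ := key p12 p23 p31 hP12 hP23 hP31 (by linear_combination hE)
  constructor
  · funext i
    fin_cases i <;>
      simp [v, Matrix.mulVec, dotProduct, Fin.sum_univ_three] <;>
      linear_combination -hE
  · intro i
    fin_cases i <;> simp [v]
    · nlinarith [mul_pos (show (0:ℝ) < μ + p23 by linarith) (show (0:ℝ) < μ - p23 + p12 + p31 by linarith)]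
    · nlinarith [mul_pos (show (0:ℝ) < μ + p31 by linarith) (show (0:ℝ) < μ - p31 + p23 + p12 by linarith)]
    · nlinarith [mul_pos (show (0:ℝ) < μ + p12 by linarith) (show (0:ℝ) < μ - p12 + p31 + p23 by linarith)]
end

section
/- Let à be a real symmetric 3×3 matrix with eigenvalues λ > 0 ≥ ν₁ ≥ ν₂, D a positive diagonal matrix, and v a λ-eigenvector of Ã. Define H^± = {x : (D^{1/2}x)ᵀÃ(D^{1/2}x) = 2, ±⟨D^{1/2}x, v⟩ ≥ 0}. Then for any x ∈ H⁺ and y ∈ H⁻, one has (D^{1/2}(x+y))ᵀ Ã (D^{1/2}(x+y)) ≤ 0. -/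
/-!
The characteristic polynomial forces `λ` to be the only positive eigenvalue of `Ã`, and a simple
one, so expanding in an orthonormal eigenbasis gives `Q w * ‖v‖² ≤ λ ⟪w, v⟫²` for the quadratic
form `Q w = wᵀ Ã w`. Hence `λ ⟪·, v⟫² / ‖v‖² - Q` is positive semidefinite, and its
Cauchy–Schwarz inequality is a reverse Cauchy–Schwarz inequality for `Q`: for `X, Y` on the
level set `Q = 2` on opposite sides of `v⊥`, the polar form satisfies `Q(X, Y) ≤ -2`, so
`Q (X + Y) = 4 + 2 Q(X, Y) ≤ 0`.
-/

open Matrix Finset Polynomial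

theorem le_neg_of_sq_sub_le_mul {c κ α β r : ℝ} (hc : 0 ≤ c) (hκ : 0 ≤ κ)
    (hα : κ ≤ c * α ^ 2) (hβ : κ ≤ c * β ^ 2) (hαβ : α * β ≤ 0)
    (h : (c * (α * β) - r) ^ 2 ≤ (c * α ^ 2 - κ) * (c * β ^ 2 - κ)) : r ≤ -κ := by
  by_contra! hr
  have hu : c * (α * β) ≤ 0 := mul_nonpos_of_nonneg_of_nonpos hc hαβ
  have huκ : c * (α * β) + κ ≤ 0 := by nlinarith [mul_le_mul hα hβ hκ (hκ.trans hα)]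
  have hgap : (c * (α * β) + κ) ^ 2 - (c * α ^ 2 - κ) * (c * β ^ 2 - κ) =
      κ * c * (α + β) ^ 2 := by
    ring
  -- `c αβ - r < c αβ + κ ≤ 0`, so the left side of `h` exceeds `(c αβ + κ)² ≥` its right side
  nlinarith [mul_nonneg (mul_nonneg hκ hc) (sq_nonneg (α + β))]

namespace LinearMap.BilinForm

variable {V : Type*} [AddCommGroup V] [Module ℝ V] {B : LinearMap.BilinForm ℝ V}

theorem IsPosSemidef.apply_sq_le (hB : B.IsPosSemidef) (a b : V) :
    B a b ^ 2 ≤ B a a * B b b := by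
  have hdisc := discrim_le_zero (a := B a a) (b := 2 * B a b) (c := B b b) fun t => by
    have := hB.nonneg (t • a + b)
    simp only [map_add, map_smul, LinearMap.add_apply, LinearMap.smul_apply, smul_eq_mul,
      hB.eq b a] at this
    linarith
  rw [discrim] at hdisc
  linarith

theorem apply_add_add_nonpos_of_le_mul_sq (hB : B.IsSymm) {ℓ : V →ₗ[ℝ] ℝ} {c : ℝ}
    (hc : 0 ≤ c) (hle : ∀ w, B w w ≤ c * ℓ w ^ 2) {κ : ℝ} (hκ : 0 ≤ κ) {a b : V}
    (ha : B a a = κ) (hb : B b b = κ) (hab : ℓ a * ℓ b ≤ 0) : B (a + b) (a + b) ≤ 0 := by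
  have hP : (c • linMulLin ℓ ℓ - B).IsPosSemidef :=
    { eq x y := by
        simp only [LinearMap.sub_apply, LinearMap.smul_apply, linMulLin_apply, hB.eq x y,
          mul_comm (ℓ x)]
      nonneg w := by
        simp only [LinearMap.sub_apply, LinearMap.smul_apply, linMulLin_apply, smul_eq_mul]
        nlinarith [hle w] }
  have hcs := hP.apply_sq_le a b
  simp only [LinearMap.sub_apply, LinearMap.smul_apply, linMulLin_apply, smul_eq_mul, ← sq,
    ha, hb] at hcs
  have hab' : B a b ≤ -κ :=
    le_neg_of_sq_sub_le_mul hc hκ (ha ▸ hle a) (hb ▸ hle b) hab hcs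
  have hsum : B (a + b) (a + b) = 2 * κ + 2 * B a b := by
    simp only [map_add, LinearMap.add_apply, ha, hb, hB.eq b a]; ring
  linarith

end LinearMap.BilinForm

theorem sum_mul_sq_mul_sum_sq_le {ι : Type*} [Fintype ι] {μ : ι → ℝ}
    (hμ : {i | 0 < μ i}.Subsingleton) {lam : ℝ} (hlam : 0 < lam) {ζ : ι → ℝ}
    (hζ : ∀ i, μ i * ζ i = lam * ζ i) (hζ0 : ζ ≠ 0) (z : ι → ℝ) :
    (∑ i, μ i * z i ^ 2) * ∑ i, ζ i ^ 2 ≤ lam * (∑ i, z i * ζ i) ^ 2 := by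
  classical
  obtain ⟨i₀, hi₀⟩ := Function.ne_iff.mp hζ0
  have hμi₀ : μ i₀ = lam := mul_right_cancel₀ hi₀ (hζ i₀)
  have hμ_nonpos : ∀ i ≠ i₀, μ i ≤ 0 := fun i hi =>
    not_lt.mp fun h => hi (hμ h (show 0 < μ i₀ from hμi₀ ▸ hlam))
  have hζ_eq_zero : ∀ i ≠ i₀, ζ i = 0 := fun i hi =>
    (mul_eq_zero.mp (by linear_combination hζ i : (μ i - lam) * ζ i = 0)).resolve_left
      (by linarith [hμ_nonpos i hi])
  have hquad : ∑ i, μ i * z i ^ 2 ≤ lam * z i₀ ^ 2 := by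
    rw [← add_sum_erase _ _ (mem_univ i₀), hμi₀, add_le_iff_nonpos_right]
    exact sum_nonpos fun i hi =>
      mul_nonpos_of_nonpos_of_nonneg (hμ_nonpos i (ne_of_mem_erase hi)) (sq_nonneg _)
  have hnorm : ∑ i, ζ i ^ 2 = ζ i₀ ^ 2 :=
    Fintype.sum_eq_single i₀ fun i hi => by simp [hζ_eq_zero i hi]
  have hdot : ∑ i, z i * ζ i = z i₀ * ζ i₀ :=
    Fintype.sum_eq_single i₀ fun i hi => by simp [hζ_eq_zero i hi]
  rw [hnorm, hdot]
  calc (∑ i, μ i * z i ^ 2) * ζ i₀ ^ 2 ≤ lam * z i₀ ^ 2 * ζ i₀ ^ 2 :=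
        mul_le_mul_of_nonneg_right hquad (sq_nonneg _)
    _ = lam * (z i₀ * ζ i₀) ^ 2 := by ring

theorem Set.subsingleton_setOf_iff_countP_map_le_one {ι α : Type*} [Fintype ι] (f : ι → α)
    (p : α → Prop) [DecidablePred p] :
    {i | p (f i)}.Subsingleton ↔ (Finset.univ.val.map f).countP p ≤ 1 := by
  rw [Multiset.countP_map, ← Finset.filter_val, ← Finset.card_def,
    Finset.card_le_one_iff_subsingleton_coe, ← Finset.coe_sort_coe, Set.subsingleton_coe,
    Finset.coe_filter]
  simp

namespace Matrix.IsHermitian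

variable {n : Type*} [Fintype n] [DecidableEq n] {A : Matrix n n ℝ} (hA : A.IsHermitian)

theorem map_eigenvalues_eq_of_det_eq {ι : Type*} [Fintype ι] (ν : ι → ℝ)
    (h : ∀ t : ℝ, (t • (1 : Matrix n n ℝ) - A).det = ∏ i, (t - ν i)) :
    univ.val.map hA.eigenvalues = univ.val.map ν := by
  have hpoly : A.charpoly = ∏ i, (X - C (ν i)) := Polynomial.funext fun t => by
    simpa [eval_charpoly, eval_prod, smul_one_eq_diagonal] using h t
  have hroots := hA.roots_charpoly_eq_eigenvalues
  rw [hpoly, roots_prod _ _ (prod_ne_zero_iff.mpr fun i _ => X_sub_C_ne_zero (ν i))]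
    at hroots
  simpa using hroots.symm

theorem dotProduct_eq_sum_eigenvectorBasis (w z : n → ℝ) :
    w ⬝ᵥ z =
      ∑ i, (⇑(hA.eigenvectorBasis i) ⬝ᵥ w) * (⇑(hA.eigenvectorBasis i) ⬝ᵥ z) := by
  have parseval := hA.eigenvectorBasis.sum_inner_mul_inner (WithLp.toLp 2 w) (WithLp.toLp 2 z)
  simp only [EuclideanSpace.inner_eq_star_dotProduct, star_trivial] at parseval
  rw [dotProduct_comm w z, ← parseval]
  simp only [dotProduct_comm z]

theorem eigenvectorBasis_dotProduct_mulVec (i : n) (w : n → ℝ) :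
    ⇑(hA.eigenvectorBasis i) ⬝ᵥ A *ᵥ w =
      hA.eigenvalues i * (⇑(hA.eigenvectorBasis i) ⬝ᵥ w) := by
  rw [dotProduct_mulVec, ← mulVec_transpose, ← conjTranspose_eq_transpose_of_trivial, hA.eq,
    hA.mulVec_eigenvectorBasis, smul_dotProduct, smul_eq_mul]

theorem dotProduct_mulVec_mul_le (hpos : {i | 0 < hA.eigenvalues i}.Subsingleton) {lam : ℝ}
    (hlam : 0 < lam) {v : n → ℝ} (hv : A *ᵥ v = lam • v) (hv0 : v ≠ 0) (w : n → ℝ) :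
    w ⬝ᵥ A *ᵥ w * (v ⬝ᵥ v) ≤ lam * (w ⬝ᵥ v) ^ 2 := by
  set c : (n → ℝ) → n → ℝ := fun u i => ⇑(hA.eigenvectorBasis i) ⬝ᵥ u
  have hζ : ∀ i, hA.eigenvalues i * c v i = lam * c v i := fun i => by
    simp only [c]
    rw [← hA.eigenvectorBasis_dotProduct_mulVec, hv, dotProduct_smul, smul_eq_mul]
  have hζ0 : c v ≠ 0 := fun h => hv0 <| dotProduct_self_eq_zero.mp <| by
    rw [hA.dotProduct_eq_sum_eigenvectorBasis]
    exact sum_eq_zero fun i _ => mul_eq_zero_of_left (congrFun h i) _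
  have key := sum_mul_sq_mul_sum_sq_le hpos hlam hζ hζ0 (c w)
  rw [hA.dotProduct_eq_sum_eigenvectorBasis w, hA.dotProduct_eq_sum_eigenvectorBasis v,
    hA.dotProduct_eq_sum_eigenvectorBasis w v]
  simp only [eigenvectorBasis_dotProduct_mulVec]
  convert key using 3 <;> simp only [c] <;> ring

end Matrix.IsHermitian

theorem separation_lemma_for_quadric_general (A : Matrix (Fin 3) (Fin 3) ℝ) (hA : A.IsSymm)
    (lam nu1 nu2 : ℝ)
    (hchar : ∀ t : ℝ, (t • (1 : Matrix (Fin 3) (Fin 3) ℝ) - A).det =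
      (t - lam) * (t - nu1) * (t - nu2))
    (hlam : 0 < lam) (hnu1 : nu1 ≤ 0) (hnu2 : nu2 ≤ 0)
    (v : Fin 3 → ℝ) (hv : A.mulVec v = lam • v) (hv0 : v ≠ 0)
    (d : Fin 3 → ℝ)
    (x y : Fin 3 → ℝ)
    (hx2 : (fun i => Real.sqrt (d i) * x i) ⬝ᵥ A.mulVec (fun i => Real.sqrt (d i) * x i) = 2)
    (hxv : 0 ≤ (fun i => Real.sqrt (d i) * x i) ⬝ᵥ v)
    (hy2 : (fun i => Real.sqrt (d i) * y i) ⬝ᵥ A.mulVec (fun i => Real.sqrt (d i) * y i) = 2)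
    (hyv : (fun i => Real.sqrt (d i) * y i) ⬝ᵥ v ≤ 0) :
    (fun i => Real.sqrt (d i) * (x + y) i) ⬝ᵥ
        A.mulVec (fun i => Real.sqrt (d i) * (x + y) i) ≤ 0 := by
  have hA' : A.IsHermitian := by rwa [IsHermitian, conjTranspose_eq_transpose_of_trivial]
  have hpos : {i | 0 < hA'.eigenvalues i}.Subsingleton := by
    rw [Set.subsingleton_setOf_iff_countP_map_le_one, hA'.map_eigenvalues_eq_of_det_eq
      ![lam, nu1, nu2] (by simpa [Fin.prod_univ_three] using hchar)]
    simp [Fin.univ_val_map, hlam, hnu1, hnu2]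
  have hvv : 0 < v ⬝ᵥ v :=
    lt_of_le_of_ne (by simpa using dotProduct_star_self_nonneg v)
      (Ne.symm (dotProduct_self_eq_zero.not.mpr hv0))
  have hle : ∀ w, toBilin' A w w ≤ lam / (v ⬝ᵥ v) * dotProductBilin ℝ ℝ v w ^ 2 := by
    intro w
    rw [toBilin'_apply', dotProductBilin_apply_apply, dotProduct_comm v w, div_mul_eq_mul_div,
      le_div_iff₀ hvv]
    exact hA'.dotProduct_mulVec_mul_le hpos hlam hv hv0 w
  have hsum : (fun i => Real.sqrt (d i) * (x + y) i) =
      (fun i => Real.sqrt (d i) * x i) + fun i => Real.sqrt (d i) * y i := by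
    ext i; simp [mul_add]
  rw [hsum, ← toBilin'_apply']
  refine (toBilin' A).apply_add_add_nonpos_of_le_mul_sq (isSymm_toBilin'_iff_isSymm.mpr hA)
    (by positivity) hle zero_le_two (by rwa [toBilin'_apply']) (by rwa [toBilin'_apply']) ?_
  simp only [dotProductBilin_apply_apply, dotProduct_comm v]
  exact mul_nonpos_of_nonneg_of_nonpos hxv hyv

theorem separation_lemma_for_quadric (A : Matrix (Fin 3) (Fin 3) ℝ) (hA : A.IsSymm)
    (lam nu1 nu2 : ℝ)
    (hchar : ∀ t : ℝ, (t • (1 : Matrix (Fin 3) (Fin 3) ℝ) - A).det =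
      (t - lam) * (t - nu1) * (t - nu2))
    (hlam : 0 < lam) (hnu1 : nu1 ≤ 0) (hnu2 : nu2 ≤ 0)
    (v : Fin 3 → ℝ) (hv : A.mulVec v = lam • v) (hv0 : v ≠ 0)
    (d : Fin 3 → ℝ) (hd : ∀ i, 0 < d i)
    (x y : Fin 3 → ℝ)
    (hx2 : (fun i => Real.sqrt (d i) * x i) ⬝ᵥ A.mulVec (fun i => Real.sqrt (d i) * x i) = 2)
    (hxv : 0 ≤ (fun i => Real.sqrt (d i) * x i) ⬝ᵥ v)
    (hy2 : (fun i => Real.sqrt (d i) * y i) ⬝ᵥ A.mulVec (fun i => Real.sqrt (d i) * y i) = 2)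
    (hyv : (fun i => Real.sqrt (d i) * y i) ⬝ᵥ v ≤ 0) :
    (fun i => Real.sqrt (d i) * (x + y) i) ⬝ᵥ
        A.mulVec (fun i => Real.sqrt (d i) * (x + y) i) ≤ 0 :=
  separation_lemma_for_quadric_general A hA lam nu1 nu2 hchar hlam hnu1 hnu2 v hv hv0 d x y hx2 hxv
    hy2 hyv
end

section
/- Let a, b ∈ ℝ³ be linearly independent, p > 2, α = (p+√(p²−4))/2, and v_n = u_{n−1}(p)·a + u_n(p)·b where u_n(p) are the normalized Chebyshev polynomials of the second kind (u_{−2}=−1, u_{−1}=0, u_{n+1}=p·u_n − u_{n−1}). Then v_n/‖v_n‖ converges as n → ∞ to (a + α·b)/‖a + α·b‖. -/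
/-!
Writing `α, β = (p ± √(p² - 4)) / 2` for the roots of `X² - p X + 1`, Binet's formula gives
`(α - β) u_{n-1} = αⁿ - βⁿ`. Since `α β = 1` and `0 < β < 1`, rescaling `v_n` by the positive
factor `(α - β) βⁿ` yields `(a + α b) - β²ⁿ (a + β b)`, which tends to `a + α b ≠ 0`; normalization
is insensitive to positive scalars and continuous away from `0`.
-/

open Filter Topology NormedSpace

section Normalize

variable {V : Type*} [NormedAddCommGroup V] [NormedSpace ℝ V]

theorem NormedSpace.continuousAt_normalize {x : V} (hx : x ≠ 0) :
    ContinuousAt (normalize : V → V) x :=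
  (continuousAt_id.norm.inv₀ (norm_ne_zero_iff.mpr hx)).smul continuousAt_id

theorem NormedSpace.tendsto_normalize_of_pos_smul {ι : Type*} {l : Filter ι} {v : ι → V}
    {c : ι → ℝ} {x : V} (hc : ∀ i, 0 < c i) (hv : Tendsto (fun i => c i • v i) l (𝓝 x))
    (hx : x ≠ 0) : Tendsto (fun i => normalize (v i)) l (𝓝 (normalize x)) :=
  ((continuousAt_normalize hx).tendsto.comp hv).congr fun i => normalize_smul_of_pos (hc i) _

end Normalize

section Binet

variable {R : Type*} [CommRing R] {p α β : R}

theorem sub_mul_eq_pow_sub_pow_of_recurrence (hsum : α + β = p) (hprod : α * β = 1)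
    {w : ℕ → R} (h0 : w 0 = 0) (h1 : w 1 = 1) (hrec : ∀ n, w (n + 2) = p * w (n + 1) - w n)
    (n : ℕ) : (α - β) * w n = α ^ n - β ^ n := by
  induction n using Nat.twoStepInduction with
  | zero => simp [h0]
  | one => simp [h1]
  | more n ih₀ ih₁ =>
    rw [hrec, mul_sub, mul_left_comm, ih₀, ih₁, ← hsum]
    linear_combination (α ^ n - β ^ n) * hprod

theorem pow_mul_sub_smul_eq_sub_smul {M : Type*} [AddCommGroup M] [Module R M]
    (hprod : α * β = 1) {w : ℕ → R} (hw : ∀ n, (α - β) * w n = α ^ n - β ^ n) (a b : M)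
    (n : ℕ) :
    (β ^ n * (α - β)) • (w n • a + w (n + 1) • b) = (a + α • b) - (β ^ 2) ^ n • (a + β • b) := by
  have hpow : α ^ n * β ^ n = 1 := by rw [← mul_pow, hprod, one_pow]
  have ha : β ^ n * (α - β) * w n = 1 - (β ^ 2) ^ n := by
    rw [mul_assoc, hw]; linear_combination hpow
  have hb : β ^ n * (α - β) * w (n + 1) = α - (β ^ 2) ^ n * β := by
    rw [mul_assoc, hw]; linear_combination α * hpow
  rw [smul_add, smul_smul, smul_smul, ha, hb]
  module

end Binet

theorem char_roots_of_two_lt {p α β : ℝ} (hp : 2 < p) (hα : α = (p + √(p ^ 2 - 4)) / 2)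
    (hβ : β = (p - √(p ^ 2 - 4)) / 2) : α + β = p ∧ α * β = 1 ∧ 0 < β ∧ β < 1 ∧ 1 < α := by
  have hdisc : 0 < p ^ 2 - 4 := by nlinarith
  have hsq := Real.sq_sqrt hdisc.le
  have hpos := Real.sqrt_pos.mpr hdisc
  have hsp : √(p ^ 2 - 4) < p := by nlinarith
  have hprod : α * β = 1 := by subst hα hβ; linear_combination -hsq / 4
  have hβpos : 0 < β := by rw [hβ]; linarith
  have hβα : β < α := by rw [hα, hβ]; linarith
  exact ⟨by rw [hα, hβ]; ring, hprod, hβpos, by nlinarith, by nlinarith⟩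

theorem chebyshev_vector_limit (a b : EuclideanSpace ℝ (Fin 3))
    (hab : LinearIndependent ℝ ![a, b]) (p : ℝ) (hp : 2 < p) (u : ℤ → ℝ)
    (hu2 : u (-2) = -1) (hu1 : u (-1) = 0)
    (hrec : ∀ n : ℤ, -1 ≤ n → u (n + 1) = p * u n - u (n - 1)) :
    Filter.Tendsto
      (fun n : ℕ => ‖u ((n : ℤ) - 1) • a + u (n : ℤ) • b‖⁻¹ •
        (u ((n : ℤ) - 1) • a + u (n : ℤ) • b))
      Filter.atTop
      (nhds (‖a + ((p + Real.sqrt (p ^ 2 - 4)) / 2) • b‖⁻¹ •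
        (a + ((p + Real.sqrt (p ^ 2 - 4)) / 2) • b))) := by
  set α := (p + √(p ^ 2 - 4)) / 2 with hα
  set β := (p - √(p ^ 2 - 4)) / 2 with hβ
  obtain ⟨hsum, hprod, hβpos, hβ1, hα1⟩ := char_roots_of_two_lt hp hα hβ
  set w : ℕ → ℝ := fun n => u (n - 1)
  have hw := sub_mul_eq_pow_sub_pow_of_recurrence hsum hprod (w := w) hu1
    (by simpa [w, hu1, hu2] using hrec (-1) le_rfl)
    (fun n => by
      simp only [w]; push_cast
      rw [show (n : ℤ) + 2 - 1 = n + 1 by ring, add_sub_cancel_right]; exact hrec n (by omega))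
  have hlim : Tendsto (fun n : ℕ => (a + α • b) - (β ^ 2) ^ n • (a + β • b)) atTop
      (𝓝 (a + α • b)) := by
    simpa using tendsto_const_nhds.sub ((tendsto_pow_atTop_nhds_zero_of_lt_one (sq_nonneg β)
      (by nlinarith)).smul_const (a + β • b))
  have hne : a + α • b ≠ 0 := fun h => by
    simpa using (LinearIndependent.pair_iff.mp hab 1 α (by simpa using h)).1
  refine tendsto_normalize_of_pos_smul (c := fun n => β ^ n * (α - β))
    (fun n => mul_pos (pow_pos hβpos n) (by linarith)) ?_ hne
  simpa [w] using hlim.congr fun n => (pow_mul_sub_smul_eq_sub_smul hprod hw a b n).symm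
end

section
/- Let p, q, r ≥ 2 be real numbers with p² + q² + r² − pqr ≤ 4, let λ be the unique positive eigenvalue of the symmetric matrix à with diagonal 2 and off-diagonal entries p = Ã_{lm}, q = Ã_{ln}, r = Ã_{mn} (indices {l,m,n}={1,2,3}), let α_p = (p+√(p²−4))/2, and let v be the positive eigenvector given by v_l = (λ−2)² + (p+q)(λ−2) + pr + qr − r² and v_m = (λ−2)² + (p+r)(λ−2) + pq + rq − q². Then α_p·v_l − v_m ≥ 0. -/
/-!
Write `μ = λ - 2`, so that `det (λ - Ã) = 0` becomes `μ³ - (p² + q² + r²) μ - 2pqr = 0`,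
and note `v_l = (μ + r)(μ + p + q - r)`, `v_m = (μ + q)(μ + p + r - q)`. The cluster-cyclic
condition forces `μ > 0`, and the cubic gives `(qμ + pr) v_m = (rμ + pq) v_l`. Since `α_p` is
the larger root of `x² - p x + 1`, it suffices that `Q(x, y) = x² - p x y + y²` is nonpositive
at `(rμ + pq, qμ + pr)`; as a quadratic in `μ` its three coefficients are all nonpositive.
-/

open Matrix

theorem det_smul_one_sub_eq (p q r lam : ℝ) :
    (lam • (1 : Matrix (Fin 3) (Fin 3) ℝ) - !![2, p, q; p, 2, r; q, r, 2]).det =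
      (lam - 2) ^ 3 - (p ^ 2 + q ^ 2 + r ^ 2) * (lam - 2) - 2 * (p * q * r) := by
  simp [det_fin_three]
  ring

theorem pos_of_cubic_eq_zero {S c μ : ℝ} (hS : 12 ≤ S) (hSc : S - c ≤ 4) (hμ : -2 < μ)
    (h : μ ^ 3 - S * μ - 2 * c = 0) : 0 < μ := by
  by_contra! hμ0
  -- the cubic is decreasing on `[-2, 0]` and nonpositive at `-2`
  have hdiff : μ ^ 3 - S * μ - 2 * c - (2 * S - 2 * c - 8) =
      (μ + 2) * (μ ^ 2 - 2 * μ + 4 - S) := by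
    ring
  have : (μ + 2) * (μ ^ 2 - 2 * μ + 4 - S) < 0 :=
    mul_neg_of_pos_of_neg (by linarith) (by nlinarith)
  linarith

theorem sq_lt_of_cubic_eq_zero {S c μ : ℝ} (hc : 0 < c) (hμ : 0 < μ)
    (h : μ ^ 3 - S * μ - 2 * c = 0) : S < μ ^ 2 := by
  have : S * μ < μ ^ 2 * μ := by nlinarith
  exact lt_of_mul_lt_mul_right this hμ.le

theorem eigenvector_ratio {p q r μ : ℝ}
    (h : μ ^ 3 - (p ^ 2 + q ^ 2 + r ^ 2) * μ - 2 * (p * q * r) = 0) :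
    (q * μ + p * r) * ((μ + q) * (μ + p + r - q)) =
      (r * μ + p * q) * ((μ + r) * (μ + p + q - r)) := by
  linear_combination (q - r) * h

theorem quadratic_form_nonpos {p q r μ : ℝ} (hp : 2 ≤ p) (hK : q ^ 2 + r ^ 2 - p * q * r ≤ 0)
    (hμ : 0 ≤ μ) :
    (r * μ + p * q) ^ 2 - p * (r * μ + p * q) * (q * μ + p * r) + (q * μ + p * r) ^ 2
      ≤ 0 := by
  have hmid : 0 ≤ p * (q ^ 2 + r ^ 2) - 4 * q * r := by nlinarith [sq_nonneg (q - r)]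
  have hcoeffs :
      (r * μ + p * q) ^ 2 - p * (r * μ + p * q) * (q * μ + p * r) + (q * μ + p * r) ^ 2 =
      (q ^ 2 + r ^ 2 - p * q * r) * μ ^ 2 - p * (p * (q ^ 2 + r ^ 2) - 4 * q * r) * μ
        + p ^ 2 * (q ^ 2 + r ^ 2 - p * q * r) := by ring
  rw [hcoeffs]
  have h1 := mul_nonpos_of_nonpos_of_nonneg hK (sq_nonneg μ)
  have h2 := mul_nonneg (mul_nonneg (by linarith : (0:ℝ) ≤ p) hmid) hμ
  have h3 := mul_nonpos_of_nonneg_of_nonpos (sq_nonneg p) hK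
  linarith

theorem quadratic_form_nonpos_of_mul_eq {p x y A B : ℝ} (hy : 0 < y) (hxy : y * B = x * A)
    (h : x ^ 2 - p * x * y + y ^ 2 ≤ 0) : A ^ 2 - p * A * B + B ^ 2 ≤ 0 := by
  have hscale : y ^ 2 * (A ^ 2 - p * A * B + B ^ 2) = A ^ 2 * (x ^ 2 - p * x * y + y ^ 2) := by
    linear_combination (y * B + x * A - p * y * A) * hxy
  have : y ^ 2 * (A ^ 2 - p * A * B + B ^ 2) ≤ 0 :=
    hscale ▸ mul_nonpos_of_nonneg_of_nonpos (sq_nonneg A) h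
  exact nonpos_of_mul_nonpos_right this (by positivity)

theorem le_mul_of_quadratic_form_nonpos {p A B : ℝ} (hp : 2 ≤ p) (hA : 0 ≤ A)
    (h : A ^ 2 - p * A * B + B ^ 2 ≤ 0) : B ≤ (p + √(p ^ 2 - 4)) / 2 * A := by
  set t := √(p ^ 2 - 4)
  have ht : t ^ 2 = p ^ 2 - 4 := Real.sq_sqrt (by nlinarith)
  have ht0 : 0 ≤ t := Real.sqrt_nonneg _
  -- the roots `(p ± t) / 2` of `x ^ 2 - p x + 1` factor the form
  have hfac : ((p + t) / 2 * A - B) * ((p - t) / 2 * A - B) = A ^ 2 - p * A * B + B ^ 2 := by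
    linear_combination (-A ^ 2 / 4) * ht
  by_contra! hlt
  have : 0 < ((p + t) / 2 * A - B) * ((p - t) / 2 * A - B) :=
    mul_pos_of_neg_of_neg (by linarith) (by nlinarith)
  linarith

theorem alpha_v_inequality (p q r : ℝ) (hp : 2 ≤ p) (hq : 2 ≤ q) (hr : 2 ≤ r)
    (hC : p ^ 2 + q ^ 2 + r ^ 2 - p * q * r ≤ 4)
    (lam : ℝ) (hlam : 0 < lam)
    (heig : (lam • (1 : Matrix (Fin 3) (Fin 3) ℝ) -
        !![2, p, q; p, 2, r; q, r, 2]).det = 0) :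
    ((p + Real.sqrt (p ^ 2 - 4)) / 2) *
        ((lam - 2) ^ 2 + (p + q) * (lam - 2) + p * r + q * r - r ^ 2) -
      ((lam - 2) ^ 2 + (p + r) * (lam - 2) + p * q + r * q - q ^ 2) ≥ 0 := by
  have hcubic := det_smul_one_sub_eq p q r lam ▸ heig
  have hμ : 0 < lam - 2 :=
    pos_of_cubic_eq_zero (by nlinarith) (by linarith) (by linarith) hcubic
  have hrμ : r < lam - 2 := by
    have := sq_lt_of_cubic_eq_zero (by positivity) hμ hcubic
    exact lt_of_pow_lt_pow_left₀ 2 hμ.le (by nlinarith)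
  have hvl : 0 ≤ (lam - 2 + r) * (lam - 2 + p + q - r) := mul_nonneg (by linarith) (by linarith)
  have hform := quadratic_form_nonpos_of_mul_eq (by positivity) (eigenvector_ratio hcubic)
    (quadratic_form_nonpos hp (by nlinarith) hμ.le)
  rw [ge_iff_le, sub_nonneg]
  convert le_mul_of_quadratic_form_nonpos hp hvl hform using 1 <;> ring
end
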